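/- arXiv:1311.2285 — 3 statements merged into one kernel-verified Lean document; each statement's English description precedes it below -/
import Mathlib

section
/- Let H be a set of infinite regular cardinals with ω ∈ H. Then for every GO space X: X is [ν,ν]-compact for every ν ∈ H if and only if X has no gap and no pseudo-gap whose type belongs to H. -/
universe u v

open Set Cardinal Filter Topology TopologicalSpace

section Defs

variable {X : Type u} [LinearOrder X]

/-- A subset `Y` of a linear order `X`, having no maximum, is `lam`-full in `X` on the right
if for every `y ∈ Y` the set `⋃ y' ∈ Y, (y, y')` (intervals computed in `X`)
has cardinality at least `lam`. -/
def FullRight (lam : Cardinal.{u}) (Y : Set X) : Prop :=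
  (¬ ∃ m ∈ Y, ∀ y ∈ Y, y ≤ m) ∧
    ∀ y ∈ Y, lam ≤ #(⋃ y' ∈ Y, Ioo y y')

/-- A subset `Y` of a linear order `X`, having no minimum, is `lam`-full in `X` on the left
if for every `y ∈ Y` the set `⋃ y' ∈ Y, (y', y)` (intervals computed in `X`)
has cardinality at least `lam`. -/
def FullLeft (lam : Cardinal.{u}) (Y : Set X) : Prop :=
  (¬ ∃ m ∈ Y, ∀ y ∈ Y, m ≤ y) ∧
    ∀ y ∈ Y, lam ≤ #(⋃ y' ∈ Y, Ioo y' y)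

/-- The pair `(A, B)` is a gap of the space `X`: `A`, `B` are open, `A ∪ B = X`,
every element of `A` is less than every element of `B`, `A` has no maximum and `B` has
no minimum (`A` or `B` may be empty). -/
def IsGap [TopologicalSpace X] (A B : Set X) : Prop :=
  IsOpen A ∧ IsOpen B ∧ A ∪ B = Set.univ ∧ (∀ a ∈ A, ∀ b ∈ B, a < b) ∧
    (¬ ∃ m ∈ A, ∀ a ∈ A, a ≤ m) ∧ (¬ ∃ m ∈ B, ∀ b ∈ B, m ≤ b)

/-- The pair `(A, B)` is a pseudo-gap of the space `X`: `A`, `B` are open and nonempty,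
`A ∪ B = X`, every element of `A` is less than every element of `B`, and either `A` has a
maximum and `B` has no minimum, or `A` has no maximum and `B` has a minimum. -/
def IsPseudoGap [TopologicalSpace X] (A B : Set X) : Prop :=
  IsOpen A ∧ IsOpen B ∧ A ∪ B = Set.univ ∧ (∀ a ∈ A, ∀ b ∈ B, a < b) ∧
    A.Nonempty ∧ B.Nonempty ∧
    (((∃ m ∈ A, ∀ a ∈ A, a ≤ m) ∧ ¬ ∃ m ∈ B, ∀ b ∈ B, m ≤ b) ∨
      ((¬ ∃ m ∈ A, ∀ a ∈ A, a ≤ m) ∧ ∃ m ∈ B, ∀ b ∈ B, m ≤ b))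

/-- The cofinality of `A`: the least cardinality of a subset of `A` cofinal in `A`. -/
noncomputable def cofinCard (A : Set X) : Cardinal.{u} :=
  sInf {c | ∃ S : Set X, S ⊆ A ∧ (∀ a ∈ A, ∃ s ∈ S, a ≤ s) ∧ c = #S}

/-- The coinitiality of `B`: the least cardinality of a subset of `B` coinitial in `B`. -/
noncomputable def coinitCard (B : Set X) : Cardinal.{u} :=
  sInf {c | ∃ S : Set X, S ⊆ B ∧ (∀ b ∈ B, ∃ s ∈ S, s ≤ b) ∧ c = #S}

/-- `mu` is a type of the gap `(A, B)`: `mu` is the cofinality of `A` or the coinitiality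
of `B`. -/
def IsGapType (mu : Cardinal.{u}) (A B : Set X) : Prop :=
  mu = cofinCard A ∨ mu = coinitCard B

/-- `mu` is the type of the pseudo-gap `(A, B)`: the cofinality of `A` if `B` has a minimum,
the coinitiality of `B` if `A` has a maximum. -/
def IsPseudoGapType (mu : Cardinal.{u}) (A B : Set X) : Prop :=
  ((∃ m ∈ B, ∀ b ∈ B, m ≤ b) ∧ mu = cofinCard A) ∨
    ((∃ m ∈ A, ∀ a ∈ A, a ≤ m) ∧ mu = coinitCard B)

end Defs

/-- A topological space is `[ν, ν]`-compact if every open cover of cardinality at most `ν`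
has a subcover of cardinality less than `ν`. -/
def NuNuCompact (X : Type u) [TopologicalSpace X] (ν : Cardinal.{u}) : Prop :=
  ∀ 𝒰 : Set (Set X), (∀ U ∈ 𝒰, IsOpen U) → ⋃₀ 𝒰 = Set.univ → #𝒰 ≤ ν →
    ∃ 𝒱 ⊆ 𝒰, #𝒱 < ν ∧ ⋃₀ 𝒱 = Set.univ

/-- A topological space is weakly `[ν, ν]`-compact if every open cover of cardinality at
most `ν` has a subfamily of cardinality less than `ν` whose union is dense. -/
def WeakNuNuCompact (X : Type u) [TopologicalSpace X] (ν : Cardinal.{u}) : Prop :=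
  ∀ 𝒰 : Set (Set X), (∀ U ∈ 𝒰, IsOpen U) → ⋃₀ 𝒰 = Set.univ → #𝒰 ≤ ν →
    ∃ 𝒱 ⊆ 𝒰, #𝒱 < ν ∧ Dense (⋃₀ 𝒱)

/-- A topological space is initially `lam`-compact if every open cover of cardinality at
most `lam` has a finite subcover. -/
def InitiallyCompact (X : Type u) [TopologicalSpace X] (lam : Cardinal.{u}) : Prop :=
  ∀ 𝒰 : Set (Set X), (∀ U ∈ 𝒰, IsOpen U) → ⋃₀ 𝒰 = Set.univ → #𝒰 ≤ lam →
    ∃ 𝒱 ⊆ 𝒰, 𝒱.Finite ∧ ⋃₀ 𝒱 = Set.univ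

/-- A topological space is weakly initially `lam`-compact if every open cover of cardinality
at most `lam` has a finite subfamily whose union is dense. -/
def WeakInitiallyCompact (X : Type u) [TopologicalSpace X] (lam : Cardinal.{u}) : Prop :=
  ∀ 𝒰 : Set (Set X), (∀ U ∈ 𝒰, IsOpen U) → ⋃₀ 𝒰 = Set.univ → #𝒰 ≤ lam →
    ∃ 𝒱 ⊆ 𝒰, 𝒱.Finite ∧ Dense (⋃₀ 𝒱)

/-- The sequence `x` `D`-converges to `p`: for every open neighbourhood `U` of `p`,
`{i | x i ∈ U} ∈ D`. -/
def DConv {I : Type v} {X : Type u} [TopologicalSpace X] (D : Ultrafilter I)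
    (x : I → X) (p : X) : Prop :=
  ∀ U : Set X, IsOpen U → p ∈ U → {i | x i ∈ U} ∈ D

/-- `X` is `D`-compact: every `I`-indexed sequence of elements of `X` `D`-converges to some
point of `X`. -/
def DCompact {I : Type v} (D : Ultrafilter I) (X : Type u) [TopologicalSpace X] : Prop :=
  ∀ x : I → X, ∃ p : X, DConv D x p

/-- `p` is a `D`-limit point of the sequence of sets `Y`: for every neighbourhood `U`
of `p`, `{i | U ∩ Y i ≠ ∅} ∈ D`. -/
def DLimitPt {I : Type v} {X : Type u} [TopologicalSpace X] (D : Ultrafilter I)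
    (Y : I → Set X) (p : X) : Prop :=
  ∀ U ∈ nhds p, {i | (U ∩ Y i).Nonempty} ∈ D

/-- `X` is `D`-pseudocompact: every `I`-indexed sequence of nonempty open sets of `X` has a
`D`-limit point. -/
def DPseudocompact {I : Type v} (D : Ultrafilter I) (X : Type u) [TopologicalSpace X] : Prop :=
  ∀ O : I → Set X, (∀ i, IsOpen (O i)) → (∀ i, (O i).Nonempty) → ∃ p : X, DLimitPt D O p

/-- The ultrafilter `D` is `ν`-decomposable: there is `f : I → ν` such that the preimage of
every subset of `ν` of cardinality less than `ν` is not in `D`. -/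
def Decomposable {I : Type v} (D : Ultrafilter I) (ν : Cardinal.{u}) : Prop :=
  ∃ f : I → ν.ord.ToType, ∀ S : Set ν.ord.ToType, #S < ν → f ⁻¹' S ∉ D

/-!
A cover of size `ν` without subcover of size `< ν` yields a family `x : ν → X` in which every point
has a neighbourhood containing fewer than `ν` of its terms. In a GO space, the points with fewer
than `ν` terms at or below them, and those with fewer than `ν` terms at or above them, form two
open sets; if they covered `X`, the side holding `ν` terms would have cofinality (or coinitiality)
`ν`, making a gap or pseudo-gap of type `ν`. So some point `t` splits the family into two halves of
size `ν`. Splitting the lower half again and again gives a strictly decreasing sequence `tₙ` with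
`ν` terms in every `(tₙ₊₁, tₙ]`; as there is no gap or pseudo-gap of type `ω`, the `tₙ` accumulate
at a lower bound, and a small neighbourhood of that point contains some `(tₙ₊₁, tₙ]`.

Conversely, if `(A, B)` is a gap or pseudo-gap and `S` is cofinal in `A` of size `μ`, the cover
`{B} ∪ {(-∞, s) : s ∈ S}` has no subcover of size `< μ`.
-/

open OrderDual

section Cofinality

variable {X : Type u} [LinearOrder X]

theorem cofinCard_spec (A : Set X) :
    ∃ S ⊆ A, (∀ a ∈ A, ∃ s ∈ S, a ≤ s) ∧ #S = cofinCard A := by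
  obtain ⟨S, hSA, hS, hcard⟩ := csInf_mem (s := {c | ∃ S : Set X, S ⊆ A ∧
    (∀ a ∈ A, ∃ s ∈ S, a ≤ s) ∧ c = #S}) ⟨#A, A, subset_rfl, fun a ha => ⟨a, ha, le_rfl⟩, rfl⟩
  exact ⟨S, hSA, hS, hcard.symm⟩

theorem cofinCard_le {A S : Set X} (hSA : S ⊆ A) (hS : ∀ a ∈ A, ∃ s ∈ S, a ≤ s) :
    cofinCard A ≤ #S :=
  csInf_le' ⟨S, hSA, hS, rfl⟩

theorem le_cofinCard {A : Set X} {ν : Cardinal.{u}}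
    (h : ∀ S ⊆ A, (∀ a ∈ A, ∃ s ∈ S, a ≤ s) → ν ≤ #S) : ν ≤ cofinCard A := by
  obtain ⟨S, hSA, hS, hcard⟩ := cofinCard_spec A
  exact hcard ▸ h S hSA hS

theorem cofinCard_empty : cofinCard (∅ : Set X) = 0 :=
  le_zero_iff.1 <| (cofinCard_le (empty_subset _) fun _ h => h.elim).trans_eq (mk_eq_zero _)

theorem aleph0_le_cofinCard {A : Set X} (hA : A.Nonempty) (hmax : ¬ ∃ m ∈ A, ∀ a ∈ A, a ≤ m) :
    ℵ₀ ≤ cofinCard A := by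
  refine le_cofinCard fun S hSA hS => not_lt.1 fun hfin => hmax ?_
  obtain ⟨a, ha⟩ := hA
  obtain ⟨s₀, hs₀, -⟩ := hS a ha
  obtain ⟨m, hm, hmS⟩ := exists_max_image S id (lt_aleph0_iff_set_finite.1 hfin) ⟨s₀, hs₀⟩
  exact ⟨m, hSA hm, fun b hb => let ⟨s, hs, hbs⟩ := hS b hb; hbs.trans (hmS s hs)⟩

theorem not_exists_max_and_cofinCard_eq {ι : Type u} {x : ι → X}
    {A : Set X} {N : Set ι} {ν : Cardinal.{u}} (hν : ν.IsRegular) (hN : #N = ν)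
    (hNA : ∀ α ∈ N, x α ∈ A) (hsmall : ∀ a ∈ A, #(N ∩ x ⁻¹' Iic a : Set ι) < ν) :
    (¬ ∃ m ∈ A, ∀ a ∈ A, a ≤ m) ∧ cofinCard A = ν := by
  have hcof : ∀ a ∈ A, ∃ α ∈ N, a < x α := fun a ha => by
    by_contra! h
    exact (hsmall a ha).not_ge (hN.symm.trans_le (mk_le_mk_of_subset fun α hα => ⟨hα, h α hα⟩))
  refine ⟨fun ⟨m, hm, hmax⟩ => ?_, le_antisymm ?_ ?_⟩
  · obtain ⟨α, hα, hmα⟩ := hcof m hm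
    exact (hmax _ (hNA α hα)).not_gt hmα
  · refine (cofinCard_le (image_subset_iff.2 hNA) fun a ha => ?_).trans (mk_image_le.trans hN.le)
    obtain ⟨α, hα, haα⟩ := hcof a ha
    exact ⟨x α, mem_image_of_mem x hα, haα.le⟩
  · refine le_cofinCard fun S hSA hS => not_lt.1 fun hSν => (lt_irrefl #N) ?_
    calc #N ≤ #(⋃ s ∈ S, N ∩ x ⁻¹' Iic s : Set ι) := mk_le_mk_of_subset fun α hα =>
          let ⟨s, hs, hαs⟩ := hS (x α) (hNA α hα); mem_biUnion hs ⟨hα, hαs⟩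
      _ < ν := (card_biUnion_lt_iff_forall_of_isRegular hν hSν).2 fun s hs => hsmall s (hSA hs)
      _ = #N := hN.symm

end Cofinality

section Cuts

variable {X : Type u} [LinearOrder X] [TopologicalSpace X]

structure IsOpenCut (A B : Set X) : Prop where
  isOpen_left : IsOpen A
  isOpen_right : IsOpen B
  union_eq_univ : A ∪ B = Set.univ
  lt : ∀ a ∈ A, ∀ b ∈ B, a < b

theorem IsOpenCut.dual {A B : Set X} (h : IsOpenCut A B) :
    IsOpenCut (ofDual ⁻¹' B) (ofDual ⁻¹' A) :=
  ⟨h.isOpen_right, h.isOpen_left, by rw [union_comm, ← preimage_union, h.union_eq_univ]; rfl,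
    fun b hb a ha => h.lt a ha b hb⟩

-- Read in `X` and in `Xᵒᵈ`, this covers both ways a gap or pseudo-gap can have type `ν`.
variable (X) in
def HasOpenCutOfCofinality (ν : Cardinal.{u}) : Prop :=
  ∃ A B : Set X, IsOpenCut A B ∧ (¬ ∃ m ∈ A, ∀ a ∈ A, a ≤ m) ∧ cofinCard A = ν

theorem exists_gap_or_pseudoGap_iff {ν : Cardinal.{u}} (hν : ν ≠ 0) :
    (∃ A B : Set X, (IsGap A B ∧ IsGapType ν A B) ∨ (IsPseudoGap A B ∧ IsPseudoGapType ν A B)) ↔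
      HasOpenCutOfCofinality X ν ∨ HasOpenCutOfCofinality Xᵒᵈ ν := by
  constructor
  · rintro ⟨A, B, ⟨⟨hA, hB, hAB, hlt, hmax, hmin⟩, hν | hν⟩ |
      ⟨⟨hA, hB, hAB, hlt, -, -, ⟨hmax, hmin⟩ | ⟨hmax, hmin⟩⟩, ⟨hmin', hν⟩ | ⟨hmax', hν⟩⟩⟩
    · exact .inl ⟨A, B, ⟨hA, hB, hAB, hlt⟩, hmax, hν.symm⟩
    · exact .inr ⟨_, _, IsOpenCut.dual ⟨hA, hB, hAB, hlt⟩, hmin, hν.symm⟩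
    · exact (hmin hmin').elim
    · exact .inr ⟨_, _, IsOpenCut.dual ⟨hA, hB, hAB, hlt⟩, hmin, hν.symm⟩
    · exact .inl ⟨A, B, ⟨hA, hB, hAB, hlt⟩, hmax, hν.symm⟩
    · exact (hmax hmax').elim
  · rintro (⟨A, B, ⟨hA, hB, hAB, hlt⟩, hmax, rfl⟩ | ⟨B, A, ⟨hB, hA, hBA, hlt⟩, hmin, rfl⟩)
    · have hAne : A.Nonempty := nonempty_iff_ne_empty.2 fun h => hν (h ▸ cofinCard_empty)
      by_cases hmin : ∃ m ∈ B, ∀ b ∈ B, m ≤ b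
      · exact ⟨A, B, .inr ⟨⟨hA, hB, hAB, hlt, hAne, hmin.imp fun _ h => h.1, .inr ⟨hmax, hmin⟩⟩,
          .inl ⟨hmin, rfl⟩⟩⟩
      · exact ⟨A, B, .inl ⟨⟨hA, hB, hAB, hlt, hmax, hmin⟩, .inl rfl⟩⟩
    · have hBne : B.Nonempty := nonempty_iff_ne_empty.2 fun h => hν (h ▸ cofinCard_empty)
      have hAB : toDual ⁻¹' A ∪ toDual ⁻¹' B = Set.univ := by
        rw [← preimage_union, union_comm, hBA, preimage_univ]
      by_cases hmax : ∃ m ∈ toDual ⁻¹' A, ∀ a ∈ toDual ⁻¹' A, a ≤ m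
      · exact ⟨_, _, .inr ⟨⟨hA, hB, hAB, fun a ha b hb => hlt b hb a ha,
          hmax.imp fun _ h => h.1, hBne, .inl ⟨hmax, hmin⟩⟩, .inr ⟨hmax, rfl⟩⟩⟩
      · exact ⟨_, _, .inl ⟨⟨hA, hB, hAB, fun a ha b hb => hlt b hb a ha, hmax, hmin⟩, .inr rfl⟩⟩

end Cuts

section OrdConnectedNhds

variable {X : Type u} [LinearOrder X] [TopologicalSpace X]

-- Together with `T1Space`, equivalent to having a base of order-convex open sets.
variable (X) in
def OrdConnectedNhds : Prop :=
  ∀ p : X, ∀ U ∈ 𝓝 p, ∃ V ∈ 𝓝 p, V.OrdConnected ∧ V ⊆ U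

namespace OrdConnectedNhds

theorem of_isTopologicalBasis {𝓑 : Set (Set X)} (hB : IsTopologicalBasis 𝓑)
    (hc : ∀ s ∈ 𝓑, s.OrdConnected) : OrdConnectedNhds X := fun _ _ hU => by
  obtain ⟨V, hV𝓑, hpV, hVU⟩ := hB.mem_nhds_iff.1 hU
  exact ⟨V, (hB.isOpen hV𝓑).mem_nhds hpV, hc V hV𝓑, hVU⟩

theorem dual (hX : OrdConnectedNhds X) : OrdConnectedNhds Xᵒᵈ := fun p U hU => by
  obtain ⟨V, hV, hVc, hVU⟩ := hX (ofDual p) U hU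
  exact ⟨ofDual ⁻¹' V, hV, hVc.dual, hVU⟩

theorem isOpen_Iio [T1Space X] (hX : OrdConnectedNhds X) (a : X) : IsOpen (Iio a) := by
  refine isOpen_iff_mem_nhds.2 fun p hp => ?_
  obtain ⟨V, hV, hVc, hVa⟩ := hX p {a}ᶜ (isOpen_compl_singleton.mem_nhds hp.ne)
  exact mem_of_superset hV fun w hw =>
    not_le.1 fun haw => hVa (hVc.out (mem_of_mem_nhds hV) hw ⟨hp.le, haw⟩) rfl

theorem isOpen_Ioi [T1Space X] (hX : OrdConnectedNhds X) (a : X) : IsOpen (Ioi a) :=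
  haveI : T1Space Xᵒᵈ := ‹T1Space X›
  hX.dual.isOpen_Iio (toDual a)

end OrdConnectedNhds

end OrdConnectedNhds

theorem HasOpenCutOfCofinality.not_nuNuCompact {X : Type u} [LinearOrder X] [TopologicalSpace X]
    (hIio : ∀ a : X, IsOpen (Iio a)) {μ : Cardinal.{u}} (hμ : μ.IsRegular)
    (h : HasOpenCutOfCofinality X μ) : ¬ NuNuCompact X μ := by
  obtain ⟨A, B, hcut, hmax, rfl⟩ := h
  obtain ⟨S, hSA, hS, hScard⟩ := cofinCard_spec A
  intro hcomp
  have hopen : ∀ U ∈ insert B (Iio '' S), IsOpen U := by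
    rintro U (rfl | ⟨s, -, rfl⟩)
    exacts [hcut.isOpen_right, hIio s]
  have hcover : ⋃₀ insert B (Iio '' S) = Set.univ := by
    refine eq_univ_of_forall fun p => ?_
    rcases hcut.union_eq_univ.symm ▸ mem_univ p with hpA | hpB
    · obtain ⟨a, haA, hpa⟩ : ∃ a ∈ A, p < a := by
        by_contra! h
        exact hmax ⟨p, hpA, h⟩
      obtain ⟨s, hsS, has⟩ := hS a haA
      exact ⟨Iio s, mem_insert_of_mem _ ⟨s, hsS, rfl⟩, hpa.trans_le has⟩
    · exact ⟨B, mem_insert _ _, hpB⟩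
  have hcard : #(insert B (Iio '' S) : Set (Set X)) ≤ cofinCard A :=
    calc #(insert B (Iio '' S) : Set (Set X)) ≤ #S + 1 :=
          mk_insert_le.trans (add_le_add_left mk_image_le 1)
      _ = cofinCard A := by rw [hScard, add_one_eq hμ.aleph0_le]
  obtain ⟨𝒱, h𝒱, h𝒱card, h𝒱cover⟩ := hcomp _ hopen hcover hcard
  refine h𝒱card.not_ge ((cofinCard_le (S := {s ∈ S | Iio s ∈ 𝒱}) (fun s hs => hSA hs.1)
    fun a ha => ?_).trans (mk_le_of_injective (f := fun s => (⟨Iio s.1, s.2.2⟩ : 𝒱))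
      fun s t hst => Subtype.ext (Iio_injective (congrArg Subtype.val hst))))
  obtain ⟨V, hV𝒱, haV⟩ := sUnion_eq_univ_iff.1 h𝒱cover a
  rcases h𝒱 hV𝒱 with rfl | ⟨s, hs, rfl⟩
  · exact absurd (hcut.lt a ha a haV) (lt_irrefl a)
  · exact ⟨s, ⟨hs, hV𝒱⟩, haV.le⟩

theorem nuNuCompact_of_forall_exists_le_mk_preimage {X : Type u} [TopologicalSpace X]
    {ν : Cardinal.{u}} (hν : ℵ₀ ≤ ν)
    (h : ∀ x : ν.ord.ToType → X, ∃ p, ∀ U ∈ 𝓝 p, ν ≤ #(x ⁻¹' U)) : NuNuCompact X ν := by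
  intro 𝒰 hopen hcover hcard
  by_contra! hsub
  have h𝒰 : #𝒰 = ν := hcard.antisymm (not_lt.1 fun hlt => hsub 𝒰 subset_rfl hlt hcover)
  obtain ⟨e⟩ : Nonempty (ν.ord.ToType ≃ 𝒰) := Cardinal.eq.1 (by rw [mk_ord_toType, h𝒰])
  have hIio (α : ν.ord.ToType) : #(Iio α) < ν := by simpa using mk_Iio_lt α (by simp)
  have hIic (α : ν.ord.ToType) : #(Iic α) < ν := by
    rw [← Iio_insert]
    exact mk_insert_le.trans_lt (add_lt_of_lt hν (hIio α) (one_lt_aleph0.trans_le hν))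
  have hx (α : ν.ord.ToType) : ∃ p, p ∉ ⋃₀ ((fun β => (e β : Set X)) '' Iic α) :=
    (ne_univ_iff_exists_notMem _).1 <| hsub _ (by rintro _ ⟨β, -, rfl⟩; exact (e β).2)
      (mk_image_le.trans_lt (hIic α))
  choose x hx using hx
  obtain ⟨p, hp⟩ := h x
  obtain ⟨U, hU, hpU⟩ := sUnion_eq_univ_iff.1 hcover p
  obtain ⟨γ, rfl⟩ : ∃ γ, (e γ : Set X) = U := ⟨e.symm ⟨U, hU⟩, by simp⟩
  refine (hp _ ((hopen _ (e γ).2).mem_nhds hpU)).not_gt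
    ((mk_le_mk_of_subset (t := Iio γ) fun α hα => ?_).trans_lt (hIio γ))
  exact mem_Iio.2 <| not_le.1 fun hγα => hx α ⟨_, ⟨γ, hγα, rfl⟩, hα⟩

section SmallFamily

variable {X : Type u} [LinearOrder X] [TopologicalSpace X] {ι : Type u} {ν : Cardinal.{u}}
  {x : ι → X}

theorem isOpen_setOf_mk_inter_preimage_Iic_lt (hν : ℵ₀ ≤ ν)
    (hx : ∀ p, ∃ V ∈ 𝓝 p, V.OrdConnected ∧ #(x ⁻¹' V) < ν) (M : Set ι) :
    IsOpen {u | #(M ∩ x ⁻¹' Iic u : Set ι) < ν} := by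
  refine isOpen_iff_mem_nhds.2 fun u hu => ?_
  obtain ⟨V, hV, hVc, hVx⟩ := hx u
  refine mem_of_superset hV fun w hw => ?_
  have hsub : M ∩ x ⁻¹' Iic w ⊆ (M ∩ x ⁻¹' Iic u) ∪ x ⁻¹' V := fun α ⟨hαM, hαw⟩ =>
    (le_or_gt (x α) u).imp (fun h => ⟨hαM, h⟩)
      fun h => hVc.out (mem_of_mem_nhds hV) hw ⟨h.le, hαw⟩
  exact (mk_le_mk_of_subset hsub).trans_lt
    ((mk_union_le _ _).trans_lt (add_lt_of_lt hν hu hVx))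

theorem exists_le_mk_inter_preimage_Iic_and_Ioi (hν : ν.IsRegular) (hι : #ι ≤ ν)
    (hx : ∀ p, ∃ V ∈ 𝓝 p, V.OrdConnected ∧ #(x ⁻¹' V) < ν)
    (hcut : ¬ HasOpenCutOfCofinality X ν) (hcut' : ¬ HasOpenCutOfCofinality Xᵒᵈ ν)
    (M : Set ι) (hM : ν ≤ #M) :
    ∃ t, ν ≤ #(M ∩ x ⁻¹' Iic t : Set ι) ∧ ν ≤ #(M ∩ x ⁻¹' Ioi t : Set ι) := by
  by_contra! hsplit
  have hunion {s t : Set ι} (hs : #s < ν) (ht : #t < ν) : #(s ∪ t : Set ι) < ν :=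
    (mk_union_le _ _).trans_lt (add_lt_of_lt hν.aleph0_le hs ht)
  have hx' : ∀ p : Xᵒᵈ, ∃ V ∈ 𝓝 p, V.OrdConnected ∧ #((toDual ∘ x) ⁻¹' V) < ν := fun p =>
    let ⟨V, hV, hVc, hVx⟩ := hx (ofDual p); ⟨ofDual ⁻¹' V, hV, hVc.dual, hVx⟩
  set A := {u | #(M ∩ x ⁻¹' Iic u : Set ι) < ν}
  set B := {u | #(M ∩ x ⁻¹' Ici u : Set ι) < ν}
  have hAB : IsOpenCut A B := by
    refine ⟨isOpen_setOf_mk_inter_preimage_Iic_lt hν.aleph0_le hx M,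
      isOpen_setOf_mk_inter_preimage_Iic_lt (x := toDual ∘ x) hν.aleph0_le hx' M,
      eq_univ_of_forall fun u => ?_, fun a ha b hb => not_le.1 fun hba => ?_⟩
    · refine or_iff_not_imp_left.2 fun hu => ?_
      obtain ⟨V, hV, -, hVx⟩ := hx u
      have hsub : M ∩ x ⁻¹' Ici u ⊆ (M ∩ x ⁻¹' Ioi u) ∪ x ⁻¹' V := fun α ⟨hαM, hαu⟩ =>
        hαu.lt_or_eq.imp (fun h => ⟨hαM, h⟩)
          fun h : u = x α => show x α ∈ V from h ▸ mem_of_mem_nhds hV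
      exact (mk_le_mk_of_subset hsub).trans_lt (hunion (hsplit u (not_lt.1 hu)) hVx)
    · refine hM.not_gt ((mk_le_mk_of_subset fun α hα => ?_).trans_lt (hunion ha hb))
      exact (le_total (x α) a).imp (fun h => ⟨hα, h⟩) fun h => ⟨hα, hba.trans h⟩
  have hmass : ν ≤ #(M ∩ x ⁻¹' A : Set ι) ∨ ν ≤ #(M ∩ x ⁻¹' B : Set ι) := by
    by_contra! h
    refine hM.not_gt ((mk_le_mk_of_subset fun α hα => ?_).trans_lt (hunion h.1 h.2))
    rcases hAB.union_eq_univ.symm ▸ mem_univ (x α) with h | h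
    exacts [.inl ⟨hα, h⟩, .inr ⟨hα, h⟩]
  rcases hmass with hA | hB
  · refine hcut ⟨A, B, hAB, not_exists_max_and_cofinCard_eq hν
      (le_antisymm ((mk_le_mk_of_subset (subset_univ _)).trans (mk_univ.trans_le hι)) hA)
      (fun α hα => hα.2) fun a ha => ?_⟩
    exact (mk_le_mk_of_subset (inter_subset_inter_left _ inter_subset_left)).trans_lt ha
  · refine hcut' ⟨_, _, hAB.dual, not_exists_max_and_cofinCard_eq (x := toDual ∘ x) hν
      (le_antisymm ((mk_le_mk_of_subset (subset_univ _)).trans (mk_univ.trans_le hι)) hB)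
      (fun α hα => hα.2) fun b hb => ?_⟩
    exact (mk_le_mk_of_subset (inter_subset_inter_left _ inter_subset_left)).trans_lt hb

theorem exists_strictAnti_le_mk_preimage_Ioc (hν : ν.IsRegular) (hι : #ι = ν)
    (hx : ∀ p, ∃ V ∈ 𝓝 p, V.OrdConnected ∧ #(x ⁻¹' V) < ν)
    (hcut : ¬ HasOpenCutOfCofinality X ν) (hcut' : ¬ HasOpenCutOfCofinality Xᵒᵈ ν) :
    ∃ t : ℕ → X, StrictAnti t ∧ ∀ n, ν ≤ #(x ⁻¹' Ioc (t (n + 1)) (t n)) := by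
  have hsplit := exists_le_mk_inter_preimage_Iic_and_Ioi hν hι.le hx hcut hcut'
  obtain ⟨t₀, ht₀, -⟩ := hsplit Set.univ (by rw [mk_univ, hι])
  have hstep (s : X) (hs : ν ≤ #(x ⁻¹' Iic s)) :
      ∃ t, ν ≤ #(x ⁻¹' Iic t) ∧ ν ≤ #(x ⁻¹' Ioc t s) := by
    obtain ⟨t, ht, hts⟩ := hsplit _ hs
    refine ⟨t, ht.trans (mk_le_mk_of_subset inter_subset_right), ?_⟩
    rwa [← preimage_inter, inter_comm, Ioi_inter_Iic] at hts
  choose! next hnext hnext' using hstep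
  have hbig (n : ℕ) : ν ≤ #(x ⁻¹' Iic (next^[n] t₀)) := by
    induction n with
    | zero => simpa only [Function.iterate_zero_apply, univ_inter] using ht₀
    | succ n ih => simpa only [Function.iterate_succ_apply'] using hnext _ ih
  have hIoc (n : ℕ) : ν ≤ #(x ⁻¹' Ioc (next^[n + 1] t₀) (next^[n] t₀)) := by
    simpa only [Function.iterate_succ_apply'] using hnext' _ (hbig n)
  refine ⟨fun n => next^[n] t₀, strictAnti_nat_of_succ_lt fun n => ?_, hIoc⟩
  obtain ⟨α, hα⟩ := mk_ne_zero_iff.1 (hν.pos.trans_le (hIoc n)).ne'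
  exact hα.1.trans_le hα.2

end SmallFamily

section Sequences

variable {X : Type u} [LinearOrder X] [TopologicalSpace X] [T1Space X]

theorem OrdConnectedNhds.exists_mem_lowerBounds_mem_closure (hX : OrdConnectedNhds X)
    (hω : ¬ HasOpenCutOfCofinality Xᵒᵈ ℵ₀) {t : ℕ → X} (ht : StrictAnti t) :
    ∃ b ∈ lowerBounds (range t), b ∈ closure (range t) := by
  by_contra! h
  have hAB : IsOpenCut (lowerBounds (range t)) (⋃ n, Ioi (t n)) := by
    refine ⟨isOpen_iff_mem_nhds.2 fun b hb => ?_, isOpen_iUnion fun n => hX.isOpen_Ioi (t n),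
      eq_univ_of_forall fun u => ?_, ?_⟩
    · obtain ⟨V, hV, hVc, hVt⟩ := hX b _ (isClosed_closure.isOpen_compl.mem_nhds (h b hb))
      refine mem_of_superset hV fun w hw => forall_mem_range.2 fun n => not_lt.1 fun hnw => ?_
      exact hVt (hVc.out (mem_of_mem_nhds hV) hw ⟨hb ⟨n, rfl⟩, hnw.le⟩)
        (subset_closure ⟨n, rfl⟩)
    · refine or_iff_not_imp_left.2 fun hu => ?_
      simp only [mem_lowerBounds, forall_mem_range, not_forall, not_le] at hu
      exact mem_iUnion.2 hu
    · rintro a ha b ⟨_, ⟨n, rfl⟩, hb⟩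
      exact (ha ⟨n, rfl⟩).trans_lt hb
  have htB (n : ℕ) : t n ∈ ⋃ n, Ioi (t n) := mem_iUnion.2 ⟨n + 1, ht n.lt_succ_self⟩
  have hmin : ¬ ∃ m ∈ ⋃ n, Ioi (t n), ∀ b ∈ ⋃ n, Ioi (t n), m ≤ b := by
    rintro ⟨m, hm, hmin⟩
    obtain ⟨n, hnm⟩ := mem_iUnion.1 hm
    exact (hmin _ (htB (n + 1))).not_gt ((ht n.lt_succ_self).trans hnm)
  refine hω ⟨_, _, hAB.dual, hmin, le_antisymm ?_ (aleph0_le_cofinCard ⟨_, htB 0⟩ hmin)⟩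
  refine (cofinCard_le (S := ofDual ⁻¹' range t) (by rintro _ ⟨n, rfl⟩; exact htB n)
    fun b hb => ?_).trans (countable_range t).le_aleph0
  obtain ⟨n, hnb⟩ := mem_iUnion.1 hb
  exact ⟨_, ⟨n, rfl⟩, hnb.le⟩

theorem OrdConnectedNhds.exists_forall_le_mk_preimage (hX : OrdConnectedNhds X)
    {ν : Cardinal.{u}} (hν : ν.IsRegular) (hcut : ¬ HasOpenCutOfCofinality X ν)
    (hcut' : ¬ HasOpenCutOfCofinality Xᵒᵈ ν) (hω : ¬ HasOpenCutOfCofinality Xᵒᵈ ℵ₀)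
    {ι : Type u} (hι : #ι = ν) (x : ι → X) : ∃ p, ∀ U ∈ 𝓝 p, ν ≤ #(x ⁻¹' U) := by
  by_contra! hsmall
  have hx (p : X) : ∃ V ∈ 𝓝 p, V.OrdConnected ∧ #(x ⁻¹' V) < ν := by
    obtain ⟨U, hU, hUx⟩ := hsmall p
    obtain ⟨V, hV, hVc, hVU⟩ := hX p U hU
    exact ⟨V, hV, hVc, (mk_le_mk_of_subset (preimage_mono hVU)).trans_lt hUx⟩
  obtain ⟨t, ht, htν⟩ := exists_strictAnti_le_mk_preimage_Ioc hν hι hx hcut hcut'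
  obtain ⟨b, hb, hbt⟩ := hX.exists_mem_lowerBounds_mem_closure hω ht
  obtain ⟨V, hV, hVc, hVx⟩ := hx b
  obtain ⟨_, hNV, N, rfl⟩ := mem_closure_iff_nhds.1 hbt V hV
  refine (htν N).not_gt ((mk_le_mk_of_subset (preimage_mono ?_)).trans_lt hVx)
  exact Ioc_subset_Icc_self.trans <| (Icc_subset_Icc_left (hb ⟨N + 1, rfl⟩)).trans <|
    hVc.out (mem_of_mem_nhds hV) hNV

end Sequences

/-- For a set `H` of infinite regular cardinals with `ℵ₀ ∈ H`, a GO space `X` is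
`[ν, ν]`-compact for every `ν ∈ H` iff `X` has no gap and no pseudo-gap whose type belongs
to `H`. -/
theorem stmt2 (H : Set Cardinal.{u}) (hH : ∀ ν ∈ H, ν.IsRegular) (hω : ℵ₀ ∈ H)
    (X : Type u) [LinearOrder X] [TopologicalSpace X] [T2Space X]
    (hGO : ∃ 𝓑 : Set (Set X), IsTopologicalBasis 𝓑 ∧ ∀ s ∈ 𝓑, s.OrdConnected) :
    (∀ ν ∈ H, NuNuCompact X ν) ↔
      ¬ ∃ (A B : Set X) (μ : Cardinal.{u}), μ ∈ H ∧
        ((IsGap A B ∧ IsGapType μ A B) ∨ (IsPseudoGap A B ∧ IsPseudoGapType μ A B)) := by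
  obtain ⟨𝓑, hB, hc⟩ := hGO
  have hX := OrdConnectedNhds.of_isTopologicalBasis hB hc
  have hgap (μ : Cardinal.{u}) (hμ : μ ∈ H) :=
    exists_gap_or_pseudoGap_iff (X := X) (hH μ hμ).pos.ne'
  constructor
  · rintro hcomp ⟨A, B, μ, hμ, hAB⟩
    rcases (hgap μ hμ).1 ⟨A, B, hAB⟩ with h | h
    · exact h.not_nuNuCompact hX.isOpen_Iio (hH μ hμ) (hcomp μ hμ)
    · exact h.not_nuNuCompact hX.isOpen_Ioi (hH μ hμ) (hcomp μ hμ)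
  · intro hno ν hν
    have hcut (μ : Cardinal.{u}) (hμ : μ ∈ H) :
        ¬ HasOpenCutOfCofinality X μ ∧ ¬ HasOpenCutOfCofinality Xᵒᵈ μ :=
      not_or.1 fun h => hno <| let ⟨A, B, hAB⟩ := (hgap μ hμ).2 h; ⟨A, B, μ, hμ, hAB⟩
    exact nuNuCompact_of_forall_exists_le_mk_preimage (hH ν hν).aleph0_le
      (hX.exists_forall_le_mk_preimage (hH ν hν) (hcut ν hν).1 (hcut ν hν).2 (hcut ℵ₀ hω).2
        (mk_ord_toType ν))
end

section
/- Let X be a GO space, D an ultrafilter on a set I, (x_i)_{i∈I} a sequence in X, and let A = {x ∈ X : {i ∈ I : x < x_i} ∈ D} and B = {x ∈ X : {i ∈ I : x_i < x} ∈ D}. Then (x_i)_{i∈I} D-converges to a point x ∈ X if and only if one of the following (mutually exclusive) conditions holds: (a) {i ∈ I : x_i = x} ∈ D; (b) x is the maximum of A and x belongs to the closure of B; (c) x is the minimum of B and x belongs to the closure of A. -/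
universe u v

open Set Cardinal Filter Topology TopologicalSpace

/-!
For every point `q` the ultrafilter decides whether `x` lies eventually above `q` (`q ∈ A`),
eventually below `q` (`q ∈ B`), or is eventually equal to `q`. In a GO space the open rays
are neighbourhoods, so a limit `p` bounds `A` from above and `B` from below; if `p ∈ A` is
the limit, eventually `p < x i`, and such an `x i` can only lie in `B`, whence `p ∈ closure B`.
Conversely, if `p ∈ A` and `b ∈ B` lies in a convex basic neighbourhood `V` of `p`, then
eventually `x i ∈ [p, b] ⊆ V`.
-/

def HasOrdConnectedBasis (X : Type*) [LinearOrder X] [TopologicalSpace X] : Prop :=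
  ∃ 𝓑 : Set (Set X), IsTopologicalBasis 𝓑 ∧ ∀ s ∈ 𝓑, s.OrdConnected

namespace HasOrdConnectedBasis

variable {X : Type*} [LinearOrder X] [TopologicalSpace X] (hX : HasOrdConnectedBasis X)
include hX

theorem dual : HasOrdConnectedBasis Xᵒᵈ :=
  let ⟨𝓑, h𝓑, hconv⟩ := hX
  ⟨𝓑, h𝓑, fun s hs => (hconv s hs).dual⟩

theorem Iio_mem_nhds [T1Space X] {p a : X} (h : p < a) : Iio a ∈ 𝓝 p := by
  obtain ⟨𝓑, h𝓑, hconv⟩ := hX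
  obtain ⟨V, hV𝓑, hpV, hVa⟩ :=
    h𝓑.exists_subset_of_mem_open (mem_compl_singleton_iff.2 h.ne) isOpen_compl_singleton
  refine mem_of_superset (h𝓑.mem_nhds hV𝓑 hpV) fun z hzV => not_le.1 fun haz => ?_
  exact hVa ((hconv V hV𝓑).out hpV hzV ⟨h.le, haz⟩) rfl

theorem Ioi_mem_nhds [T1Space X] {p a : X} (h : a < p) : Ioi a ∈ 𝓝 p :=
  have : T1Space Xᵒᵈ := ‹T1Space X›
  hX.dual.Iio_mem_nhds (X := Xᵒᵈ) (p := OrderDual.toDual p) h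

theorem ge_of_tendsto [T1Space X] {α : Type*} {l : Filter α} [l.NeBot] {f : α → X} {p a : X}
    (hf : Tendsto f l (𝓝 p)) (ha : ∀ᶠ i in l, a ≤ f i) : a ≤ p := by
  by_contra! hpa
  obtain ⟨i, hia, hai⟩ := (Eventually.and (hf (hX.Iio_mem_nhds hpa)) ha).exists
  exact (not_le.2 hia) hai

theorem le_of_tendsto [T1Space X] {α : Type*} {l : Filter α} [l.NeBot] {f : α → X} {p b : X}
    (hf : Tendsto f l (𝓝 p)) (hb : ∀ᶠ i in l, f i ≤ b) : p ≤ b :=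
  have : T1Space Xᵒᵈ := ‹T1Space X›
  hX.dual.ge_of_tendsto (X := Xᵒᵈ) (f := fun i => OrderDual.toDual (f i)) hf hb

theorem tendsto_of_forall_eventually_mem_uIcc {α : Type*} {l : Filter α} {f : α → X} {p : X}
    {S : Set X} (hp : p ∈ closure S) (hS : ∀ s ∈ S, ∀ᶠ i in l, f i ∈ uIcc p s) :
    Tendsto f l (𝓝 p) := by
  obtain ⟨𝓑, h𝓑, hconv⟩ := hX
  refine (h𝓑.nhds_hasBasis.tendsto_right_iff).2 fun V ⟨hV𝓑, hpV⟩ => ?_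
  obtain ⟨s, hsV, hsS⟩ := mem_closure_iff.1 hp V (h𝓑.isOpen hV𝓑) hpV
  exact (hS s hsS).mono fun i hi => (hconv V hV𝓑).uIcc_subset hpV hsV hi

end HasOrdConnectedBasis

section UltrafilterCuts

variable {I X : Type*} [LinearOrder X] (D : Ultrafilter I) (x : I → X)

theorem Ultrafilter.eventually_lt_or_eventually_gt_or_eventually_eq (q : X) :
    (∀ᶠ i in D, q < x i) ∨ (∀ᶠ i in D, x i < q) ∨ ∀ᶠ i in D, x i = q := by
  simp only [← Ultrafilter.eventually_or]
  exact Eventually.of_forall fun i => by rcases lt_trichotomy q (x i) with h | h | h <;> simp [h]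

variable [TopologicalSpace X] [T2Space X] {p : X}

theorem mem_closure_gt_of_tendsto_of_isGreatest (hx : Tendsto x D (𝓝 p))
    (hp : IsGreatest {a | ∀ᶠ i in D, a < x i} p) :
    p ∈ closure {b | ∀ᶠ i in D, x i < b} := by
  refine mem_closure_of_tendsto hx (hp.1.mono fun i hpi => ?_)
  rcases D.eventually_lt_or_eventually_gt_or_eventually_eq x (x i) with hA | hB | hE
  · exact absurd (hp.2 hA) (not_le.2 hpi)
  · exact hB
  · have hxi : Tendsto x D (𝓝 (x i)) := tendsto_const_nhds.congr' (hE.mono fun _ h => h.symm)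
    exact absurd (tendsto_nhds_unique hxi hx) hpi.ne'

theorem mem_closure_lt_of_tendsto_of_isLeast (hx : Tendsto x D (𝓝 p))
    (hp : IsLeast {b | ∀ᶠ i in D, x i < b} p) :
    p ∈ closure {a | ∀ᶠ i in D, a < x i} :=
  have : T2Space Xᵒᵈ := ‹T2Space X›
  mem_closure_gt_of_tendsto_of_isGreatest (X := Xᵒᵈ) D x hx hp

end UltrafilterCuts

theorem dConv_iff_tendsto {I X : Type*} [TopologicalSpace X] (D : Ultrafilter I) (x : I → X)
    (p : X) : DConv D x p ↔ Tendsto x D (𝓝 p) :=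
  tendsto_nhds.symm

/-- Characterization of `D`-convergence in GO spaces. -/
theorem stmt3 {X : Type u} [LinearOrder X] [TopologicalSpace X] [T2Space X]
    (hGO : ∃ 𝓑 : Set (Set X), IsTopologicalBasis 𝓑 ∧ ∀ s ∈ 𝓑, s.OrdConnected)
    {I : Type v} (D : Ultrafilter I) (x : I → X) (A B : Set X)
    (hA : A = {p : X | {i | p < x i} ∈ D}) (hB : B = {p : X | {i | x i < p} ∈ D})
    (p : X) :
    DConv D x p ↔
      ({i | x i = p} ∈ D ∨
        (p ∈ A ∧ (∀ a ∈ A, a ≤ p) ∧ p ∈ closure B) ∨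
        (p ∈ B ∧ (∀ b ∈ B, p ≤ b) ∧ p ∈ closure A)) := by
  have hX : HasOrdConnectedBasis X := hGO
  subst hA hB
  rw [dConv_iff_tendsto]
  constructor
  · intro hx
    rcases D.eventually_lt_or_eventually_gt_or_eventually_eq x p with hpA | hpB | hp
    · have hmax : IsGreatest {a | ∀ᶠ i in D, a < x i} p :=
        ⟨hpA, fun a ha => hX.ge_of_tendsto hx (ha.mono fun _ => le_of_lt)⟩
      exact Or.inr (Or.inl ⟨hpA, hmax.2, mem_closure_gt_of_tendsto_of_isGreatest D x hx hmax⟩)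
    · have hmin : IsLeast {b | ∀ᶠ i in D, x i < b} p :=
        ⟨hpB, fun b hb => hX.le_of_tendsto hx (hb.mono fun _ => le_of_lt)⟩
      exact Or.inr (Or.inr ⟨hpB, hmin.2, mem_closure_lt_of_tendsto_of_isLeast D x hx hmin⟩)
    · exact Or.inl hp
  · rintro (hp | ⟨hpA, -, hpB⟩ | ⟨hpB, -, hpA⟩)
    · exact tendsto_const_nhds.congr' (Eventually.mono hp fun _ h => h.symm)
    · exact hX.tendsto_of_forall_eventually_mem_uIcc hpB fun b hb =>
        (Eventually.and hpA hb).mono fun _ h => Icc_subset_uIcc ⟨h.1.le, h.2.le⟩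
    · exact hX.tendsto_of_forall_eventually_mem_uIcc hpA fun a ha =>
        (Eventually.and ha hpB).mono fun _ h => Icc_subset_uIcc' ⟨h.1.le, h.2.le⟩
end

section
/- Let D be an ultrafilter on a set I and let X be a GO space. Then X is D-compact if and only if X is [ν,ν]-compact for every infinite regular cardinal ν such that D is ν-decomposable. -/
universe u v

open Set Cardinal Filter Topology TopologicalSpace

/-!
If a cover of size `ν` has no subcover of size `< ν`, enumerate it along `ν` and pick `c β` outside
the first `β` members; for a map `f : I → ν` witnessing decomposability, a `D`-limit of `c ∘ f`
lies in some member `U`, which forces `f` into the small initial segment below the index of `U`.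

Conversely, let `x` have no `D`-limit in a GO space. Every point has a convex open neighbourhood
that `x` `D`-eventually avoids, so `x` lies `D`-eventually on one side of it. Hence `X` splits into
two complementary open sets: the points eventually left of `x` and those eventually right of it.
Say `x` eventually lies in the left part `A`; then `x` is also eventually above each point of `A`.
For `ν = cof A`, which is regular, rounding `x` up into a cofinal subset of `A` of size `ν`
decomposes `D`, and the increasing open cover `Aᶜ ∪ interior (Iio a)`, `a ∈ A`, has no subcover
of size `< ν`.
-/

section Cofinality

theorem exists_forall_lt_of_mk_lt_cof {J : Type u} [LinearOrder J] {S : Set J}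
    (hS : #S < Order.cof J) : ∃ j, ∀ t ∈ S, t < j :=
  not_isCofinal_iff.mp fun h => (Order.cof_le h).not_gt hS

theorem Cardinal.mk_Iic_ord_toType_lt {ν : Cardinal.{u}} (hν : ℵ₀ ≤ ν) (β : ν.ord.ToType) :
    #(Iic β) < ν := by
  rw [← Iio_insert]
  exact mk_insert_le.trans_lt
    (add_lt_of_lt hν (by simpa using mk_Iio_lt β) (one_lt_aleph0.trans_le hν))

theorem Order.isRegular_cof (J : Type u) [LinearOrder J] [Nonempty J] [NoMaxOrder J] :
    (Order.cof J).IsRegular := by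
  set ν := Order.cof J
  have hν : ℵ₀ ≤ ν := Order.aleph0_le_cof
  refine ⟨hν, ?_⟩
  rw [← Ordinal.cof_toType, Order.le_cof_iff]
  intro T hT
  by_contra! hTν
  obtain ⟨s, hs, hsν⟩ := Order.exists_cof_eq J
  obtain ⟨e⟩ : Nonempty (ν.ord.ToType ≃ s) := Cardinal.eq.mp (by rw [mk_toType, card_ord, hsν])
  have hbound : ∀ β, ∃ a, ∀ γ ≤ β, (e γ : J) < a := fun β => by
    obtain ⟨a, ha⟩ := exists_forall_lt_of_mk_lt_cof
      (mk_image_le.trans_lt (Cardinal.mk_Iic_ord_toType_lt hν β) :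
        #((fun γ => (e γ : J)) '' Iic β) < ν)
    exact ⟨a, fun γ hγ => ha _ (mem_image_of_mem _ hγ)⟩
  choose a ha using hbound
  obtain ⟨b, hb⟩ := exists_forall_lt_of_mk_lt_cof (mk_image_le.trans_lt hTν : #(a '' T) < ν)
  obtain ⟨t, hts, hbt⟩ := hs b
  obtain ⟨β, hβT, hγβ⟩ := hT (e.symm ⟨t, hts⟩)
  have := ha β _ hγβ
  rw [Equiv.apply_symm_apply] at this
  exact (this.trans ((hb _ (mem_image_of_mem a hβT)).trans_le hbt)).false

end Cofinality

section Decomposability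

variable {I : Type v} {D : Ultrafilter I} {ν : Cardinal.{u}}

theorem decomposable_of_mk_eq {J : Type u} (hJ : #J = ν) (f : I → J)
    (hf : ∀ S : Set J, #S < ν → f ⁻¹' S ∉ D) : Decomposable D ν := by
  obtain ⟨e⟩ : Nonempty (J ≃ ν.ord.ToType) := Cardinal.eq.mp (by rw [mk_toType, card_ord, hJ])
  refine ⟨e ∘ f, fun S hS => ?_⟩
  rw [preimage_comp]
  exact hf _ (by rwa [mk_preimage_equiv])

theorem decomposable_cof_of_tendsto_atTop {J : Type u} [Preorder J] {g : I → J}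
    (hg : Tendsto g D atTop) : Decomposable D (Order.cof J) := by
  obtain ⟨s, hs, hsJ⟩ := Order.exists_cof_eq J
  choose f hfs hgf using fun i => hs (g i)
  refine decomposable_of_mk_eq hsJ (fun i => ⟨f i, hfs i⟩) fun S hS hfS => ?_
  have hS' : ¬ IsCofinal (Subtype.val '' S) :=
    fun h => (Order.cof_le h).not_gt (mk_image_le.trans_lt hS)
  obtain ⟨j, hj⟩ : ∃ j, ∀ t ∈ S, ¬ j ≤ (t : J) := by simpa [IsCofinal] using hS'
  obtain ⟨i, hji, hiS⟩ :=
    (((tendsto_atTop.mp hg j).and (Ultrafilter.mem_coe.mpr hfS))).exists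
  exact hj _ hiS (hji.trans (hgf i))

end Decomposability

section Compactness

variable {X : Type u} [TopologicalSpace X]

theorem not_nuNuCompact_cof {J : Type u} [LinearOrder J] {W : J → Set X} (hW : Monotone W)
    (hopen : ∀ j, IsOpen (W j)) (hcover : ⋃ j, W j = Set.univ) (hproper : ∀ j, W j ≠ Set.univ) :
    ¬ NuNuCompact X (Order.cof J) := by
  intro hX
  obtain ⟨s, hs, hsJ⟩ := Order.exists_cof_eq J
  have hcover_s : ⋃₀ (W '' s) = Set.univ := by
    refine eq_univ_of_forall fun z => ?_
    obtain ⟨j, hzj⟩ := mem_iUnion.mp (hcover ▸ mem_univ z)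
    obtain ⟨t, hts, hjt⟩ := hs j
    exact ⟨W t, mem_image_of_mem W hts, hW hjt hzj⟩
  obtain ⟨𝒱, h𝒱, h𝒱ν, h𝒱cover⟩ :=
    hX (W '' s) (forall_mem_image.mpr fun j _ => hopen j) hcover_s (mk_image_le.trans hsJ.le)
  obtain ⟨u, -, hinj, rfl⟩ := SurjOn.exists_subset_injOn_image_eq h𝒱
  rw [mk_image_eq_of_injOn W u hinj] at h𝒱ν
  obtain ⟨j, hj⟩ := exists_forall_lt_of_mk_lt_cof h𝒱ν
  refine hproper j (eq_univ_of_univ_subset ?_)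
  rw [← h𝒱cover]
  exact sUnion_subset (forall_mem_image.mpr fun t ht => hW (hj t ht).le)

theorem DCompact.nuNuCompact {I : Type v} {D : Ultrafilter I} (hX : DCompact D X)
    {ν : Cardinal.{u}} (hν : ℵ₀ ≤ ν) (hD : Decomposable D ν) : NuNuCompact X ν := by
  intro 𝒰 hopen hcover h𝒰ν
  by_contra! hsmall
  obtain ⟨f, hf⟩ := hD
  obtain ⟨ι⟩ : Nonempty (𝒰 ↪ ν.ord.ToType) := by
    rwa [← Cardinal.le_def, mk_toType, card_ord]
  have hinit : ∀ β, ∃ z, ∀ U : 𝒰, ι U ≤ β → z ∉ (U : Set X) := fun β => by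
    have hcard : #(Subtype.val '' (ι ⁻¹' Iic β)) < ν :=
      mk_image_le.trans_lt ((mk_preimage_of_injective _ _ ι.injective).trans_lt
        (Cardinal.mk_Iic_ord_toType_lt hν β))
    obtain ⟨z, hz⟩ := (ne_univ_iff_exists_notMem _).mp
      (hsmall _ (image_subset_iff.mpr fun U _ => U.2) hcard)
    exact ⟨z, fun U hU hzU => hz ⟨U, mem_image_of_mem _ hU, hzU⟩⟩
  choose c hc using hinit
  obtain ⟨p, hp⟩ := hX (c ∘ f)
  obtain ⟨U, hU, hpU⟩ := mem_sUnion.mp (hcover ▸ mem_univ p)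
  refine hf (Iio (ι ⟨U, hU⟩)) (by simpa using mk_Iio_lt (ι ⟨U, hU⟩)) ?_
  refine Filter.mem_of_superset (hp U (hopen U hU) hpU) fun i hi => ?_
  by_contra! h
  exact hc (f i) ⟨U, hU⟩ (not_lt.mp h) hi

end Compactness

section Cut

variable {I : Type v} {X : Type u} [LinearOrder X] [TopologicalSpace X]

/-- In `Xᵒᵈ` this is the set of points with a neighbourhood lying `D`-eventually above `x`. -/
def leftOf (D : Ultrafilter I) (x : I → X) : Set X :=
  {z | ∃ V, IsOpen V ∧ z ∈ V ∧ {i | ∀ v ∈ V, v < x i} ∈ D}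

variable {D : Ultrafilter I} {x : I → X}

theorem isOpen_leftOf : IsOpen (leftOf D x) :=
  isOpen_iff_forall_mem_open.mpr fun _ ⟨V, hV, hzV, hVx⟩ =>
    ⟨V, fun _ hw => ⟨V, hV, hw, hVx⟩, hV, hzV⟩

theorem eventually_lt_of_mem_leftOf {z : X} (hz : z ∈ leftOf D x) : {i | z < x i} ∈ D := by
  obtain ⟨V, -, hzV, hVx⟩ := hz
  exact Filter.mem_of_superset hVx fun i hi => hi z hzV

theorem disjoint_leftOf : Disjoint (leftOf D x) (leftOf (X := Xᵒᵈ) D x) := by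
  refine disjoint_left.mpr fun z hl hr => ?_
  obtain ⟨i, hzi, hiz⟩ :=
    D.nonempty_of_mem (inter_mem (eventually_lt_of_mem_leftOf hl)
      (eventually_lt_of_mem_leftOf (X := Xᵒᵈ) hr))
  exact (hzi.trans (show OrderDual.toDual z < OrderDual.toDual (x i) from hiz)).false

theorem mem_leftOf_or_mem_leftOf_dual {𝓑 : Set (Set X)} (h𝓑 : IsTopologicalBasis 𝓑)
    (hconv : ∀ s ∈ 𝓑, s.OrdConnected) {z : X} (hz : ¬ DConv D x z) :
    z ∈ leftOf D x ∨ z ∈ leftOf (X := Xᵒᵈ) D x := by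
  simp only [DConv, not_forall] at hz
  obtain ⟨U, hU, hzU, hxU⟩ := hz
  obtain ⟨V, hV𝓑, hzV, hVU⟩ := h𝓑.exists_subset_of_mem_open hzU hU
  have hxV : {i | x i ∉ V} ∈ D :=
    D.compl_mem_iff_notMem.mpr fun h => hxU (Filter.mem_of_superset h fun _ hi => hVU hi)
  -- `x i` avoids the convex set `V ∋ z`, so it lies beyond all of `V` on its side of `z`
  have hside : {i | x i ∉ V} ⊆ {i | ∀ v ∈ V, v < x i} ∪ {i | ∀ v ∈ V, x i < v} := by
    intro i hi
    rcases lt_or_gt_of_ne (ne_of_mem_of_not_mem hzV hi).symm with hiz | hzi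
    · exact Or.inr fun v hv => not_le.mp fun hvi => hi ((hconv V hV𝓑).out hv hzV ⟨hvi, hiz.le⟩)
    · exact Or.inl fun v hv => not_le.mp fun hiv => hi ((hconv V hV𝓑).out hzV hv ⟨hzi.le, hiv⟩)
  rcases Ultrafilter.union_mem_iff.mp (Filter.mem_of_superset hxV hside) with h | h
  · exact Or.inl ⟨V, h𝓑.isOpen hV𝓑, hzV, h⟩
  · exact Or.inr ⟨V, h𝓑.isOpen hV𝓑, hzV, h⟩

theorem compl_leftOf_eq {𝓑 : Set (Set X)} (h𝓑 : IsTopologicalBasis 𝓑)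
    (hconv : ∀ s ∈ 𝓑, s.OrdConnected) (hx : ∀ z, ¬ DConv D x z) :
    (leftOf D x)ᶜ = leftOf (X := Xᵒᵈ) D x :=
  (IsCompl.of_eq disjoint_leftOf.eq_bot (eq_univ_of_forall fun z =>
    mem_leftOf_or_mem_leftOf_dual h𝓑 hconv (hx z))).compl_eq

theorem noMaxOrder_leftOf (hxA : {i | x i ∈ leftOf D x} ∈ D) : NoMaxOrder (leftOf D x) :=
  ⟨fun a => by
    obtain ⟨i, hiA, hai⟩ := D.nonempty_of_mem (inter_mem hxA (eventually_lt_of_mem_leftOf a.2))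
    exact ⟨⟨x i, hiA⟩, hai⟩⟩

theorem exists_not_nuNuCompact_of_mem_leftOf (hA : IsOpen (leftOf D x)ᶜ)
    (hxA : {i | x i ∈ leftOf D x} ∈ D) :
    ∃ ν : Cardinal.{u}, ℵ₀ ≤ ν ∧ ν.IsRegular ∧ Decomposable D ν ∧ ¬ NuNuCompact X ν := by
  classical
  set A := leftOf D x
  obtain ⟨i₀, hi₀⟩ := D.nonempty_of_mem hxA
  have : Nonempty A := ⟨⟨x i₀, hi₀⟩⟩
  have := noMaxOrder_leftOf hxA
  let g : I → A := fun i => if h : x i ∈ A then ⟨x i, h⟩ else ⟨x i₀, hi₀⟩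
  have hg : Tendsto g D atTop := tendsto_atTop.mpr fun a => by
    filter_upwards [Ultrafilter.mem_coe.mpr hxA,
      Ultrafilter.mem_coe.mpr (eventually_lt_of_mem_leftOf a.2)] with i hiA hai
    simp only [g, dif_pos hiA]
    exact Subtype.mk_le_mk.mpr hai.le
  let W : A → Set X := fun a => Aᶜ ∪ interior (Iio (a : X))
  have hcover : ⋃ a, W a = Set.univ := by
    refine eq_univ_of_forall fun z => ?_
    by_cases hz : z ∈ A
    · obtain ⟨V, hV, hzV, hVx⟩ := hz
      obtain ⟨i, hiA, hVi⟩ := D.nonempty_of_mem (inter_mem hxA hVx)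
      exact mem_iUnion.mpr ⟨⟨x i, hiA⟩,
        Or.inr (mem_interior.mpr ⟨V, fun v hv => hVi v hv, hV, hzV⟩)⟩
    · exact mem_iUnion.mpr ⟨⟨x i₀, hi₀⟩, Or.inl hz⟩
  refine ⟨Order.cof A, Order.aleph0_le_cof, Order.isRegular_cof A,
    decomposable_cof_of_tendsto_atTop hg, not_nuNuCompact_cof (W := W) ?_ ?_ hcover ?_⟩
  · exact fun a b hab => union_subset_union_right _ (interior_mono (Iio_subset_Iio hab))
  · exact fun a => hA.union isOpen_interior
  · exact fun a => (ne_univ_iff_exists_notMem _).mpr ⟨a, by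
      rintro (h | h)
      · exact h a.2
      · exact lt_irrefl (a : X) (mem_Iio.mp (interior_subset h))⟩

end Cut

theorem stmt8_general {I : Type v} (D : Ultrafilter I)
    (X : Type u) [LinearOrder X] [TopologicalSpace X]
    (hGO : ∃ 𝓑 : Set (Set X), IsTopologicalBasis 𝓑 ∧ ∀ s ∈ 𝓑, s.OrdConnected) :
    DCompact D X ↔
      ∀ ν : Cardinal.{u}, ℵ₀ ≤ ν → ν.IsRegular → Decomposable D ν → NuNuCompact X ν := by
  obtain ⟨𝓑, h𝓑, hconv⟩ := hGO
  refine ⟨fun hX ν hν _ hD => hX.nuNuCompact hν hD, fun hcomp x => ?_⟩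
  by_contra! hx
  have hcompl := compl_leftOf_eq h𝓑 hconv hx
  obtain ⟨ν, hν, hreg, hD, hnot⟩ :
      ∃ ν : Cardinal.{u}, ℵ₀ ≤ ν ∧ ν.IsRegular ∧ Decomposable D ν ∧ ¬ NuNuCompact X ν := by
    rcases D.mem_or_compl_mem {i | x i ∈ leftOf D x} with hxA | hxB
    · exact exists_not_nuNuCompact_of_mem_leftOf (hcompl ▸ isOpen_leftOf (X := Xᵒᵈ)) hxA
    · refine exists_not_nuNuCompact_of_mem_leftOf (X := Xᵒᵈ) (x := x) ?_ ?_
      · have hcompl' : (leftOf (X := Xᵒᵈ) D x)ᶜ = leftOf D x := compl_eq_comm.mp hcompl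
        rw [hcompl']
        exact isOpen_leftOf (X := X)
      · rw [← hcompl]
        exact hxB
  exact hnot (hcomp ν hν hreg hD)

/-- A GO space is `D`-compact iff it is `[ν, ν]`-compact for every infinite regular
cardinal `ν` such that `D` is `ν`-decomposable. -/
theorem stmt8 {I : Type v} (D : Ultrafilter I)
    (X : Type u) [LinearOrder X] [TopologicalSpace X] [T2Space X]
    (hGO : ∃ 𝓑 : Set (Set X), IsTopologicalBasis 𝓑 ∧ ∀ s ∈ 𝓑, s.OrdConnected) :
    DCompact D X ↔
      ∀ ν : Cardinal.{u}, ℵ₀ ≤ ν → ν.IsRegular → Decomposable D ν → NuNuCompact X ν :=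
  stmt8_general D X hGO
end
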